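/- arXiv:2304.09652 — 2 statements merged into one kernel-verified Lean document; each statement's English description precedes it below -/
import Mathlib

section
/- Fix integers e ≤ -1 and k ≥ 1. If d and d' both belong to S(k,e), i.e., each admits nonnegative integers m₊, m₋, m₁, m₂ with m₁ ≤ 1, m₂ ≤ 1, (·)²·|e| + m₊ − m₋ = 2k, and m₊ + m₁ + m₂ + m₋ = (·)·|e|, then |d − d'| ≤ 1. Consequently, if d₋ and d₊ denote the minimal and maximal elements of S(k,e), then either d₊ = d₋ or d₋ = d₊ − 1. -/
/-- Membership in the set `S(k,e)`: `d` is a nonnegative integer admitting nonnegative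
integers `m₊, m₋, m₁, m₂` with `m₁ ≤ 1`, `m₂ ≤ 1`, `d²·|e| + m₊ − m₋ = 2k` and
`m₊ + m₁ + m₂ + m₋ = d·|e|`. -/
def memS (e k d : ℤ) : Prop :=
  0 ≤ d ∧ ∃ mp mm m1 m2 : ℤ,
    0 ≤ mp ∧ 0 ≤ mm ∧ 0 ≤ m1 ∧ 0 ≤ m2 ∧ m1 ≤ 1 ∧ m2 ≤ 1 ∧
    d ^ 2 * |e| + mp - mm = 2 * k ∧
    mp + m1 + m2 + mm = d * |e|

lemma memS_bounds (e k d : ℤ) (h : memS e k d) :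
    0 ≤ d ∧ d * (d - 1) * |e| ≤ 2 * k ∧ 2 * k ≤ d * (d + 1) * |e| := by
  obtain ⟨hd, mp, mm, m1, m2, h1, h2, h3, h4, h5, h6, h7, h8⟩ := h
  refine ⟨hd, ?_, ?_⟩ <;> nlinarith [sq_nonneg d]

lemma memS_close (e k : ℤ) (he : e ≤ -1) (d d' : ℤ) (h : memS e k d) (h' : memS e k d') :
    d' ≤ d + 1 := by
  obtain ⟨hd, hl, hu⟩ := memS_bounds e k d h
  obtain ⟨hd', hl', hu'⟩ := memS_bounds e k d' h'
  have hE : 1 ≤ |e| := by rw [abs_of_nonpos (by linarith)]; linarith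
  by_contra hc
  push_neg at hc
  nlinarith [mul_le_mul_of_nonneg_right (show d * (d+1) ≤ (d'-1)*d' by nlinarith)
    (by linarith : (0:ℤ) ≤ |e|)]

/-- Fix integers `e ≤ -1` and `k ≥ 1`. Any two elements `d, d'` of `S(k,e)` satisfy
`|d − d'| ≤ 1`; consequently, if `d₋` and `d₊` are the minimal and maximal elements of
`S(k,e)`, then either `d₊ = d₋` or `d₋ = d₊ − 1`. -/
theorem stmt_4 (e k : ℤ) (he : e ≤ -1) (hk : 1 ≤ k) :
    (∀ d d' : ℤ, memS e k d → memS e k d' → |d - d'| ≤ 1) ∧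
    (∀ dmin dmax : ℤ,
      (memS e k dmin ∧ ∀ d, memS e k d → dmin ≤ d) →
      (memS e k dmax ∧ ∀ d, memS e k d → d ≤ dmax) →
      dmax = dmin ∨ dmin = dmax - 1) := by
  have key : ∀ d d' : ℤ, memS e k d → memS e k d' → |d - d'| ≤ 1 := by
    intro d d' h h'
    have h1 := memS_close e k he d d' h h'
    have h2 := memS_close e k he d' d h' h
    rw [abs_le]; omega
  refine ⟨key, ?_⟩
  intro dmin dmax ⟨h1, h2⟩ ⟨h3, h4⟩
  have hle := h2 dmax h3
  have habs := key dmin dmax h1 h3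
  rw [abs_le] at habs
  omega
end

section
/- Fix e = −1 and let k be a positive integer such that k ≠ n·(n−1)/2 for every positive integer n. Then every element of S(k,−1) equals ⌊√(2k + 1/4) + 1/2⌋; that is, if d is a nonnegative integer admitting nonnegative integers m₊, m₋, m₁, m₂ with m₁ ≤ 1, m₂ ≤ 1, d² + m₊ − m₋ = 2k, and m₊ + m₁ + m₂ + m₋ = d, then d = ⌊√(2k + 1/4) + 1/2⌋. In particular the minimal and maximal elements of S(k,−1) coincide. -/
/-- Fix `e = −1` and let `k` be a positive integer with `k ≠ n(n−1)/2` for every positive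
integer `n`. If `d` is a nonnegative integer admitting nonnegative integers
`m₊, m₋, m₁, m₂` with `m₁ ≤ 1`, `m₂ ≤ 1`, `d² + m₊ − m₋ = 2k` and
`m₊ + m₁ + m₂ + m₋ = d`, then `d = ⌊√(2k + 1/4) + 1/2⌋`. -/
theorem stmt_10 (k : ℤ) (hk : 1 ≤ k)
    (hknot : ∀ n : ℤ, 1 ≤ n → (k : ℝ) ≠ (n : ℝ) * ((n : ℝ) - 1) / 2) :
    ∀ d : ℤ, 0 ≤ d →
      (∃ mp mm m1 m2 : ℤ,
        0 ≤ mp ∧ 0 ≤ mm ∧ 0 ≤ m1 ∧ 0 ≤ m2 ∧ m1 ≤ 1 ∧ m2 ≤ 1 ∧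
        d ^ 2 + mp - mm = 2 * k ∧ mp + m1 + m2 + mm = d) →
      d = ⌊Real.sqrt (2 * (k : ℝ) + 1 / 4) + 1 / 2⌋ := by
  intro d hd ⟨mp, mm, m1, m2, hmp, hmm, hm1, hm2, hm1', hm2', heq, hsum⟩
  have hd1 : 1 ≤ d := by nlinarith [sq_nonneg d]
  -- weak bounds
  have hlow : d ^ 2 - d ≤ 2 * k := by linarith
  have hhigh : 2 * k ≤ d ^ 2 + d := by linarith
  -- strictness from hknot
  have hne1 : d ^ 2 - d ≠ 2 * k := by
    intro h
    apply hknot d hd1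
    have hc : ((d : ℝ)) ^ 2 - d = 2 * k := by exact_mod_cast congrArg (Int.cast : ℤ → ℝ) h
    linarith [hc]
  have hne2 : 2 * k ≠ d ^ 2 + d := by
    intro h
    apply hknot (d + 1) (by linarith)
    have hc : (2 * (k : ℝ)) = (d : ℝ) ^ 2 + d := by exact_mod_cast congrArg (Int.cast : ℤ → ℝ) h
    push_cast
    linarith [hc]
  have hlowR : (d : ℝ) ^ 2 - d < 2 * k := by
    have : d ^ 2 - d < 2 * k := lt_of_le_of_ne hlow hne1
    exact_mod_cast this
  have hhighR : (2 : ℝ) * k < (d : ℝ) ^ 2 + d := by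
    have : 2 * k < d ^ 2 + d := lt_of_le_of_ne hhigh hne2
    exact_mod_cast this
  have hdR : (1 : ℝ) ≤ (d : ℝ) := by exact_mod_cast hd1
  have hnn : (0 : ℝ) ≤ 2 * (k : ℝ) + 1 / 4 := by
    have : (1 : ℝ) ≤ (k : ℝ) := by exact_mod_cast hk
    linarith
  have hs : Real.sqrt (2 * (k : ℝ) + 1 / 4) ^ 2 = 2 * (k : ℝ) + 1 / 4 :=
    Real.sq_sqrt hnn
  have hsn : 0 ≤ Real.sqrt (2 * (k : ℝ) + 1 / 4) := Real.sqrt_nonneg _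
  symm
  rw [Int.floor_eq_iff]
  constructor
  · nlinarith [hs, hsn, hlowR, hdR]
  · nlinarith [hs, hsn, hhighR, hdR]
end
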